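/- arXiv:math/9702205 — 2 statements merged into one kernel-verified Lean document; each statement's English description precedes it below -/
import Mathlib

section
/- Let κ be an infinite cardinal and λ a cardinal with λ ≥ 2. If Γ ⊆ (κ, κ⁺) is a club subset of κ⁺ and the principle □_{κ,<λ}(Γ) holds, then the full principle □_{κ,<λ} (that is, □_{κ,<λ}((κ,κ⁺))) holds. -/
open Cardinal Set

/-- `C` is a club subset of `ν`: `C ⊆ ν`, `C` is unbounded in `ν`, and `C` is closed
under suprema of its nonempty bounded subsets. -/
def IsClubIn (C : Set Ordinal.{0}) (ν : Ordinal.{0}) : Prop :=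
  C ⊆ Set.Iio ν ∧ (∀ α < ν, ∃ β ∈ C, α ≤ β) ∧
    ∀ s ⊆ C, s.Nonempty → sSup s < ν → sSup s ∈ C

/-- `ξ` is a limit point of the set of ordinals `C`: `ξ = sup (C ∩ ξ) > 0`. -/
def IsLimitPt (C : Set Ordinal.{0}) (ξ : Ordinal.{0}) : Prop :=
  0 < ξ ∧ ξ = sSup (C ∩ Set.Iio ξ)

/-- The order type of a set of ordinals. -/
noncomputable def otype (C : Set Ordinal.{0}) : Ordinal.{1} :=
  Ordinal.type (α := C) (· < ·)

/-- `lim(Γ)`: the limit points of `Γ` lying in the interval `(κ, κ⁺)`. -/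
def sqLim (κ : Cardinal.{0}) (Γ : Set Ordinal.{0}) : Set Ordinal.{0} :=
  {ν | κ.ord < ν ∧ ν < (Order.succ κ).ord ∧ IsLimitPt Γ ν}

/-- `F` is a witnessing sequence for `□_{κ,<λ}(Γ)`. -/
def IsSquareSeq (κ lam : Cardinal.{0}) (Γ : Set Ordinal.{0})
    (F : Ordinal.{0} → Set (Set Ordinal.{0})) : Prop :=
  ∀ ν ∈ sqLim κ Γ,
    (1 ≤ #(F ν) ∧ #(F ν) < Cardinal.lift.{1} lam) ∧
    ∀ C ∈ F ν,
      C ⊆ Set.Iio ν ∩ Γ ∧ IsClubIn C ν ∧ otype C ≤ Ordinal.lift.{1} κ.ord ∧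
      ∀ ν' < ν, IsLimitPt C ν' → C ∩ Set.Iio ν' ∈ F ν'

/-- The principle `□_{κ,<λ}(Γ)`. -/
def SquareLt (κ lam : Cardinal.{0}) (Γ : Set Ordinal.{0}) : Prop :=
  ∃ F, IsSquareSeq κ lam Γ F

/-!
Enumerate the club `Iic κ ∪ Γ ∪ Ici κ⁺` increasingly by a normal function `g`. It fixes every
ordinal `≤ κ`, and since `κ⁺` is regular it also fixes `κ⁺`; hence `g` maps `(κ, κ⁺)` onto `Γ`,
order-preservingly and continuously. Continuity makes `g` send limit points to limit points, so
pulling a `□_{κ,<λ}(Γ)`-sequence back along `g`, `ν ↦ {g⁻¹ C | C ∈ F (g ν)}`, yields a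
`□_{κ,<λ}`-sequence: preimages of clubs are clubs of the same order type, and coherence is
transported because `g⁻¹ (C ∩ g ν') = g⁻¹ C ∩ ν'`.
-/

universe u

open Order

theorem StrictMono.image_Ioo_eq_range_inter {α β : Type*} [LinearOrder α] [Preorder β]
    {f : α → β} (hf : StrictMono f) (a b : α) :
    f '' Ioo a b = range f ∩ Ioo (f a) (f b) := by
  ext y
  constructor
  · rintro ⟨x, hx, rfl⟩
    exact ⟨mem_range_self x, hf hx.1, hf hx.2⟩
  · rintro ⟨⟨x, rfl⟩, hax, hxb⟩
    exact ⟨x, ⟨hf.lt_iff_lt.1 hax, hf.lt_iff_lt.1 hxb⟩, rfl⟩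

namespace Order

section RegularCardinalOrder

variable {α : Type*} [LinearOrder α] [WellFoundedLT α] [IsRegularCardinalOrder α]
  {s : Set α} {hs : IsCofinal s}

theorem enum_eq_self_of_Iic_subset {a x : α} (ha : Iic a ⊆ s) (hx : x ≤ a) :
    (enum s hs x : α) = x := by
  induction x using WellFoundedLT.induction with | ind x IH
  refine le_antisymm (enum_le_of_forall_lt (ha hx) fun y hy ↦ ?_) ?_
  · rwa [IH y hy (hy.le.trans hx)]
  · exact ((Subtype.strictMono_coe _).comp (enum s hs).strictMono).le_apply

end RegularCardinalOrder

theorem enum_lt_ord {c : Cardinal.{u}} (hc : c.IsRegular) {s : Set Ordinal.{u}}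
    {hs : IsCofinal s} (hsc : ∀ x < c.ord, ∃ y ∈ s, x < y ∧ y < c.ord) {δ : Ordinal.{u}}
    (hδ : δ < c.ord) : (enum s hs δ : Ordinal) < c.ord := by
  induction δ using WellFoundedLT.induction with | ind δ IH
  have hsup : ⨆ i : Iio δ, (enum s hs i : Ordinal) < c.ord := by
    refine Ordinal.lift_iSup_lt_of_lt_cof ?_ fun i ↦ IH i i.2 (i.2.trans hδ)
    rw [mk_Iio_ordinal, lift_lift, ← Ordinal.lift_cof, hc.cof_ord, lift_lt, ← lt_ord]
    exact hδ
  obtain ⟨y, hys, hy, hyc⟩ := hsc _ hsup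
  refine (enum_le_of_forall_lt hys fun i hi ↦ ?_).trans_lt hyc
  exact (Ordinal.le_iSup _ (⟨i, hi⟩ : Iio δ)).trans_lt hy

end Order

theorem IsClubIn.dirSupClosed_union_Ici {Γ : Set Ordinal.{0}} {b : Ordinal.{0}}
    (h : IsClubIn Γ b) : DirSupClosed (Γ ∪ Ici b) := by
  rw [dirSupClosed_iff_of_linearOrder]
  intro d hd hne x hx
  rcases le_or_gt b x with hbx | hxb
  · exact Or.inr hbx
  · have hdΓ : d ⊆ Γ := fun y hy ↦
      (hd hy).resolve_right fun hby ↦ (hx.1 hy).not_gt (hxb.trans_le hby)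
    rw [← hx.csSup_eq hne] at hxb ⊢
    exact Or.inl (h.2.2 d hdΓ hne hxb)

theorem exists_isNormal_image_Ioo_eq {c : Cardinal.{0}} (hc : c.IsRegular) {a : Ordinal.{0}}
    {Γ : Set Ordinal.{0}} (hsub : Γ ⊆ Ioo a c.ord) (hclub : IsClubIn Γ c.ord) :
    ∃ g : Ordinal.{0} → Ordinal.{0}, IsNormal g ∧ g '' Ioo a c.ord = Γ := by
  set S := Iic a ∪ (Γ ∪ Ici c.ord)
  have hS : IsClub S := ⟨(dirSupClosed_Iic a).union hclub.dirSupClosed_union_Ici,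
    fun x ↦ ⟨max x c.ord, by simp [S], le_max_left _ _⟩⟩
  have hg : IsNormal (Subtype.val ∘ enum S hS.isCofinal) := hS.isNormal_enum
  have hrange : range (Subtype.val ∘ enum S hS.isCofinal) = S := (enum_eq_iff.1 rfl).2
  have hga : (enum S hS.isCofinal a : Ordinal) = a :=
    enum_eq_self_of_Iic_subset subset_union_left le_rfl
  have hScof : ∀ x < c.ord, ∃ y ∈ S, x < y ∧ y < c.ord := fun x hx ↦ by
    obtain ⟨y, hyΓ, hxy⟩ := hclub.2.1 (x + 1) ((isSuccLimit_ord hc.aleph0_le).add_one_lt hx)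
    exact ⟨y, Or.inr (Or.inl hyΓ), Order.add_one_le_iff.1 hxy, hclub.1 hyΓ⟩
  have hgc : (enum S hS.isCofinal c.ord : Ordinal) = c.ord :=
    le_antisymm (enum_le_of_forall_lt (by simp [S]) fun δ hδ ↦ enum_lt_ord hc hScof hδ)
      hg.strictMono.le_apply
  refine ⟨_, hg, ?_⟩
  rw [hg.strictMono.image_Ioo_eq_range_inter, hrange]
  simp only [Function.comp_apply, hga, hgc]
  ext x
  have := @hsub x
  simp only [S, mem_inter_iff, mem_union, mem_Iic, mem_Ici, mem_Ioo] at this ⊢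
  grind

section Pullback

variable {g : Ordinal.{0} → Ordinal.{0}} {C : Set Ordinal.{0}} {ν : Ordinal.{0}}

theorem IsLimitPt.image (hg : IsNormal g) (h : IsLimitPt C ν) : IsLimitPt (g '' C) (g ν) := by
  obtain ⟨hν, hνsup⟩ := h
  have hne : (C ∩ Iio ν).Nonempty := by
    by_contra hempty
    rw [not_nonempty_iff_eq_empty.1 hempty, csSup_empty] at hνsup
    exact hν.ne' hνsup
  have himage : g '' C ∩ Iio (g ν) = g '' (C ∩ Iio ν) := by
    ext y
    constructor
    · rintro ⟨⟨x, hx, rfl⟩, hxν⟩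
      exact ⟨x, ⟨hx, hg.strictMono.lt_iff_lt.1 hxν⟩, rfl⟩
    · rintro ⟨x, ⟨hx, hxν⟩, rfl⟩
      exact ⟨⟨x, hx, rfl⟩, hg.strictMono hxν⟩
  refine ⟨hν.trans_le hg.strictMono.le_apply, ?_⟩
  rw [himage, ← hg.map_sSup hne ⟨ν, fun x hx ↦ hx.2.le⟩, ← hνsup]

theorem IsClubIn.preimage (hg : IsNormal g) (hC : IsClubIn C (g ν)) (hCg : C ⊆ range g) :
    IsClubIn (g ⁻¹' C) ν := by
  obtain ⟨hCν, hCunb, hCclosed⟩ := hC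
  have hsub : g ⁻¹' C ⊆ Iio ν := fun x hx ↦ hg.strictMono.lt_iff_lt.1 (hCν hx)
  refine ⟨hsub, fun α hα ↦ ?_, fun s hs hne hsν ↦ ?_⟩
  · obtain ⟨_, hyC, hαy⟩ := hCunb (g α) (hg.strictMono hα)
    obtain ⟨y, rfl⟩ := hCg hyC
    exact ⟨y, hyC, hg.strictMono.le_iff_le.1 hαy⟩
  · have hgs : g (sSup s) = sSup (g '' s) :=
      hg.map_sSup hne ⟨ν, fun x hx ↦ (hsub (hs hx)).le⟩
    change g (sSup s) ∈ C
    rw [hgs]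
    exact hCclosed _ (image_subset_iff.2 hs) (hne.image g) (hgs ▸ hg.strictMono hsν)

theorem otype_preimage (hg : StrictMono g) (hCg : C ⊆ range g) : otype (g ⁻¹' C) = otype C :=
  let e : g ⁻¹' C ≃o C := (hg.strictMonoOn _).orderIso g _ |>.trans
    (OrderIso.setCongr _ _ (image_preimage_eq_of_subset hCg))
  Ordinal.type_eq.2 ⟨e.toRelIsoLT⟩

theorem IsSquareSeq.comap {κ lam : Cardinal.{0}} {Γ Δ : Set Ordinal.{0}}
    {F : Ordinal.{0} → Set (Set Ordinal.{0})} (hF : IsSquareSeq κ lam Γ F) (hg : IsNormal g)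
    (hgI : MapsTo g (Ioo κ.ord (succ κ).ord) (Ioo κ.ord (succ κ).ord)) (hΔ : g '' Δ = Γ) :
    IsSquareSeq κ lam Δ fun ν ↦ (g ⁻¹' ·) '' F (g ν) := by
  rintro ν ⟨hκν, hνκ, hlim⟩
  obtain ⟨hcard, hmem⟩ := hF (g ν) ⟨(hgI ⟨hκν, hνκ⟩).1, (hgI ⟨hκν, hνκ⟩).2, hΔ ▸ hlim.image hg⟩
  have hΓ : ∀ C ∈ F (g ν), C ⊆ g '' Δ := fun C hC ↦ hΔ ▸ fun x hx ↦ ((hmem C hC).1 hx).2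
  have hrange : ∀ C ∈ F (g ν), C ⊆ range g := fun C hC ↦ (hΓ C hC).trans (image_subset_range _ _)
  have hinj : InjOn (g ⁻¹' ·) (F (g ν)) := fun C hC D hD hCD ↦ by
    rw [← image_preimage_eq_of_subset (hrange C hC), ← image_preimage_eq_of_subset (hrange D hD)]
    exact congrArg (g '' ·) hCD
  refine ⟨mk_image_eq_of_injOn _ _ hinj ▸ hcard, ?_⟩
  rintro _ ⟨C, hC, rfl⟩
  obtain ⟨-, hCclub, hCtype, hCcoh⟩ := hmem C hC
  have hclub := hCclub.preimage hg (hrange C hC)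
  refine ⟨fun x hx ↦ ⟨hclub.1 hx, ?_⟩, hclub, otype_preimage hg.strictMono (hrange C hC) ▸ hCtype,
    fun ν' hν'ν hlim' ↦ ⟨C ∩ Iio (g ν'), hCcoh _ (hg.strictMono hν'ν) ?_, ?_⟩⟩
  · obtain ⟨y, hy, hxy⟩ := hΓ C hC hx
    rwa [← hg.strictMono.injective hxy]
  · simpa [image_preimage_eq_of_subset (hrange C hC)] using hlim'.image hg
  · ext x
    simp [hg.strictMono.lt_iff_lt]

end Pullback

theorem square_of_club_general (κ lam : Cardinal.{0}) (hκ : ℵ₀ ≤ κ)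
    (Γ : Set Ordinal.{0}) (hsub : Γ ⊆ Set.Ioo κ.ord (Order.succ κ).ord)
    (hclub : IsClubIn Γ (Order.succ κ).ord)
    (h : SquareLt κ lam Γ) :
    SquareLt κ lam (Set.Ioo κ.ord (Order.succ κ).ord) := by
  obtain ⟨F, hF⟩ := h
  obtain ⟨g, hg, hgΓ⟩ := exists_isNormal_image_Ioo_eq (isRegular_succ hκ) hsub hclub
  exact ⟨_, hF.comap hg (mapsTo_iff_image_subset.2 (hgΓ ▸ hsub)) hgΓ⟩

/-- If `κ` is infinite, `λ ≥ 2`, `Γ ⊆ (κ, κ⁺)` is club in `κ⁺`, and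
`□_{κ,<λ}(Γ)` holds, then the full principle `□_{κ,<λ} = □_{κ,<λ}((κ,κ⁺))` holds. -/
theorem square_of_club (κ lam : Cardinal.{0}) (hκ : ℵ₀ ≤ κ) (hlam : 2 ≤ lam)
    (Γ : Set Ordinal.{0}) (hsub : Γ ⊆ Set.Ioo κ.ord (Order.succ κ).ord)
    (hclub : IsClubIn Γ (Order.succ κ).ord)
    (h : SquareLt κ lam Γ) :
    SquareLt κ lam (Set.Ioo κ.ord (Order.succ κ).ord) :=
  square_of_club_general κ lam hκ Γ hsub hclub h
end

section
/- Let (I, ν, S, b, g) be an abstract coherent club system and let C : I → Set(Ord) be its associated coherent union. Then for every i ∈ I and every limit point ν̄ of S(i) with ν̄ < ν(i), one has C(g(i, ν̄)) = ν̄ ∩ C(i). -/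
open Cardinal Set

/-- An abstract coherent club system, abstracting the data provided by Lemma 1.19 of
the paper for the sets `S(M,ζ)`: indices `i`, limit ordinals `ν i`, clubs `S i ⊆ ν i`
of order type at most `(b i)⁺`, and for each limit point `ν̄ < ν i` of `S i` an index
`g i ν̄` satisfying the coherence conditions (H3)–(H6). -/
structure CoherentClubSystem (I : Type) where
  nu : I → Ordinal.{0}
  S : I → Set Ordinal.{0}
  b : I → Cardinal.{0}
  g : I → Ordinal.{0} → I
  nu_isLimit : ∀ i, Order.IsSuccLimit (nu i)
  b_infinite : ∀ i, ℵ₀ ≤ b i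
  H1 : ∀ i, IsClubIn (S i) (nu i)
  H2 : ∀ i, otype (S i) ≤ Ordinal.lift.{1} (Order.succ (b i)).ord
  H3 : ∀ i ν', IsLimitPt (S i) ν' → ν' < nu i → nu (g i ν') = ν'
  H4 : ∀ i ν', IsLimitPt (S i) ν' → ν' < nu i → S i ∩ Set.Iio ν' ⊆ S (g i ν')
  H5 : ∀ i ν', IsLimitPt (S i) ν' → ν' < nu i → b (g i ν') = b i
  H6 : ∀ i ν' ν'', IsLimitPt (S i) ν' → IsLimitPt (S i) ν'' → ν' < ν'' → ν'' < nu i →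
    g (g i ν'') ν' = g i ν'

/-- `C` is the coherent union associated to the system: for every index `i`,
`C i = S i ∪ ⋃ {C (g i ν̄) : ν̄ a limit point of S i below ν i}`. -/
def CoherentClubSystem.IsCoherentUnion {I : Type} (sys : CoherentClubSystem I)
    (C : I → Set Ordinal.{0}) : Prop :=
  ∀ i, C i = sys.S i ∪
    ⋃ ν' ∈ {ν' | IsLimitPt (sys.S i) ν' ∧ ν' < sys.nu i}, C (sys.g i ν')

/-!
Induction on `ν i`. The inclusion `C (g i ν̄) ⊆ ν̄ ∩ C i` holds because `C (g i ν̄)` is a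
piece of the union defining `C i` and lies below `ν (g i ν̄) = ν̄`. Conversely, a point
of `ν̄ ∩ C i` lies in `S i`, handled by (H4), or in some `C (g i ν'')`: for `ν'' < ν̄`,
(H6) makes `C (g i ν'')` a piece of `C (g i ν̄)`, and for `ν'' > ν̄` the induction
hypothesis at `g i ν''`, together with (H6), gives `ν̄ ∩ C (g i ν'') = C (g i ν̄)`.
-/

lemma IsLimitPt.mono {A B : Set Ordinal.{0}} {ξ : Ordinal.{0}} (h : IsLimitPt A ξ)
    (hAB : A ∩ Iio ξ ⊆ B) : IsLimitPt B ξ := by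
  obtain ⟨hpos, hsup⟩ := h
  have hne : (A ∩ Iio ξ).Nonempty := by
    by_contra hempty
    rw [not_nonempty_iff_eq_empty.mp hempty, csSup_empty] at hsup
    exact hpos.ne' hsup
  refine ⟨hpos, le_antisymm ?_ (csSup_le' fun x hx => hx.2.le)⟩
  calc ξ = sSup (A ∩ Iio ξ) := hsup
    _ ≤ sSup (B ∩ Iio ξ) :=
      csSup_le_csSup ⟨ξ, fun x hx => hx.2.le⟩ hne (subset_inter hAB inter_subset_right)

namespace CoherentClubSystem

variable {I : Type} (sys : CoherentClubSystem I)

lemma isLimitPt_S_g {i : I} {ν' ν'' : Ordinal.{0}} (h' : IsLimitPt (sys.S i) ν')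
    (h'' : IsLimitPt (sys.S i) ν'') (hlt : ν' < ν'') (hν'' : ν'' < sys.nu i) :
    IsLimitPt (sys.S (sys.g i ν'')) ν' :=
  h'.mono fun _ hx => sys.H4 i ν'' h'' hν'' ⟨hx.1, hx.2.trans hlt⟩

variable {sys} {C : I → Set Ordinal.{0}}

namespace IsCoherentUnion

lemma mem_iff (hC : sys.IsCoherentUnion C) {i : I} {x : Ordinal.{0}} :
    x ∈ C i ↔ x ∈ sys.S i ∨
      ∃ ν', IsLimitPt (sys.S i) ν' ∧ ν' < sys.nu i ∧ x ∈ C (sys.g i ν') := by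
  rw [hC i]
  simp only [mem_union, mem_iUnion, mem_ofPred_eq, exists_prop, and_assoc]

lemma S_subset (hC : sys.IsCoherentUnion C) (i : I) : sys.S i ⊆ C i :=
  fun _ hx => hC.mem_iff.mpr (Or.inl hx)

lemma g_subset (hC : sys.IsCoherentUnion C) {i : I} {ν' : Ordinal.{0}}
    (hlim : IsLimitPt (sys.S i) ν') (hlt : ν' < sys.nu i) : C (sys.g i ν') ⊆ C i :=
  fun _ hx => hC.mem_iff.mpr (Or.inr ⟨ν', hlim, hlt, hx⟩)

lemma subset_Iio (hC : sys.IsCoherentUnion C) (i : I) : C i ⊆ Iio (sys.nu i) := by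
  intro x hx
  rcases hC.mem_iff.mp hx with hS | ⟨ν', hlim, hlt, hx'⟩
  · exact (sys.H1 i).1 hS
  · have hx'' := hC.subset_Iio (sys.g i ν') hx'
    rw [sys.H3 i ν' hlim hlt] at hx''
    exact hx''.trans hlt
termination_by sys.nu i
decreasing_by rw [sys.H3 i ν' hlim hlt]; exact hlt

lemma g_subset_g (hC : sys.IsCoherentUnion C) {i : I} {ν' ν'' : Ordinal.{0}}
    (h' : IsLimitPt (sys.S i) ν') (h'' : IsLimitPt (sys.S i) ν'') (hlt : ν' < ν'')
    (hν'' : ν'' < sys.nu i) : C (sys.g i ν') ⊆ C (sys.g i ν'') := by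
  rw [← sys.H6 i ν' ν'' h' h'' hlt hν'']
  exact hC.g_subset (sys.isLimitPt_S_g h' h'' hlt hν'')
    (by rwa [sys.H3 i ν'' h'' hν''])

lemma inter_Iio_subset_g (hC : sys.IsCoherentUnion C) {i : I} {ν' : Ordinal.{0}}
    (hlim : IsLimitPt (sys.S i) ν') (hlt : ν' < sys.nu i) :
    Iio ν' ∩ C i ⊆ C (sys.g i ν') := by
  rintro x ⟨hxν', hx⟩
  rcases hC.mem_iff.mp hx with hS | ⟨ν'', hlim'', hlt'', hx''⟩
  · exact hC.S_subset _ (sys.H4 i ν' hlim hlt ⟨hS, hxν'⟩)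
  rcases lt_trichotomy ν'' ν' with h | rfl | h
  · exact hC.g_subset_g hlim'' hlim h hlt hx''
  · exact hx''
  · have hlimg := sys.isLimitPt_S_g hlim hlim'' h hlt''
    have hltg : ν' < sys.nu (sys.g i ν'') := by rwa [sys.H3 i ν'' hlim'' hlt'']
    rw [← sys.H6 i ν' ν'' hlim hlim'' h hlt'']
    exact hC.inter_Iio_subset_g hlimg hltg ⟨hxν', hx''⟩
termination_by sys.nu i
decreasing_by rw [sys.H3 i ν'' hlim'' hlt'']; exact hlt''

end IsCoherentUnion

end CoherentClubSystem

/-- (Lemma 1.21(b)) The coherent union coheres at limit points of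
`S i`: if `ν̄ < ν i` is a limit point of `S i`, then `C (g i ν̄) = ν̄ ∩ C i`. -/
theorem coherentUnion_coherence {I : Type} (sys : CoherentClubSystem I)
    (C : I → Set Ordinal.{0}) (hC : sys.IsCoherentUnion C) :
    ∀ i ν', IsLimitPt (sys.S i) ν' → ν' < sys.nu i →
      C (sys.g i ν') = Set.Iio ν' ∩ C i := by
  intro i ν' hlim hlt
  refine (hC.inter_Iio_subset_g hlim hlt).antisymm' (subset_inter ?_ (hC.g_subset hlim hlt))
  simpa only [sys.H3 i ν' hlim hlt] using hC.subset_Iio (sys.g i ν')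
end
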